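/- Let μ be a nonzero locally finite nonnegative Borel measure on ℝⁿ which is doubling with respect to the family 𝔎 of all homothetic copies of a fixed rectangle R₀. Then for every convex set B ⊆ ℝⁿ, the boundary ∂B = closure(B) \ interior(B) satisfies μ(∂B) = 0. -/

import Mathlib

open MeasureTheory Set Filter
open scoped ENNReal Topology Pointwise

noncomputable section

/-- The maximal operator `M_{𝔅,μ}` associated to a measure `μ` and a collection `𝔅`
of subsets of `ℝⁿ`, applied to `f` at the point `x` (valued in `ℝ≥0∞`; it equals `0`
outside the union of `𝔅`). -/
noncomputable def maxOp {n : ℕ} (μ : Measure (EuclideanSpace ℝ (Fin n)))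
    (𝔅 : Set (Set (EuclideanSpace ℝ (Fin n))))
    (f : EuclideanSpace ℝ (Fin n) → ℝ) (x : EuclideanSpace ℝ (Fin n)) : ℝ≥0∞ :=
  ⨆ (B : Set (EuclideanSpace ℝ (Fin n))) (_ : B ∈ 𝔅) (_ : x ∈ B) (_ : 0 < μ B),
    (∫⁻ y in B, ENNReal.ofReal |f y| ∂μ) / μ B

/-- A collection of sets is homothecy invariant if it is closed under translations and
positive dilations. -/
def HomothecyInvariant {n : ℕ} (𝔅 : Set (Set (EuclideanSpace ℝ (Fin n)))) : Prop :=
  ∀ B ∈ 𝔅, (∀ y : EuclideanSpace ℝ (Fin n), y +ᵥ B ∈ 𝔅) ∧ (∀ s : ℝ, 0 < s → s • B ∈ 𝔅)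

/-- `μ` is doubling with respect to the collection `𝔅`, with constant `Δ`: whenever
`B ∈ 𝔅` and a translate of the dilate `2·B` contains `B`, its measure is at most
`Δ·μ(B)`. -/
def DoublingWrt {n : ℕ} (μ : Measure (EuclideanSpace ℝ (Fin n)))
    (𝔅 : Set (Set (EuclideanSpace ℝ (Fin n)))) (Δ : ℝ) : Prop :=
  ∀ B ∈ 𝔅, ∀ σ : EuclideanSpace ℝ (Fin n),
    B ⊆ σ +ᵥ (2 : ℝ) • B → μ (σ +ᵥ (2 : ℝ) • B) ≤ ENNReal.ofReal Δ * μ B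

/-- A member of a basis of convex sets: nonempty, bounded, open and convex. -/
def IsConvexBasisSet {n : ℕ} (B : Set (EuclideanSpace ℝ (Fin n))) : Prop :=
  B.Nonempty ∧ Bornology.IsBounded B ∧ IsOpen B ∧ Convex ℝ B

/-- An open axis-parallel rectangle in `ℝⁿ`. -/
def IsAxisRect {n : ℕ} (R : Set (EuclideanSpace ℝ (Fin n))) : Prop :=
  ∃ a b : Fin n → ℝ, (∀ i, a i < b i) ∧ R = {x | ∀ i, x i ∈ Set.Ioo (a i) (b i)}

/-- An open rectangle (possibly rotated rectangular parallelepiped) in `ℝⁿ`: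
the image of an open axis-parallel rectangle under a rigid motion. -/
def IsRect {n : ℕ} (R : Set (EuclideanSpace ℝ (Fin n))) : Prop :=
  ∃ (f : EuclideanSpace ℝ (Fin n) ≃ᵢ EuclideanSpace ℝ (Fin n))
    (S : Set (EuclideanSpace ℝ (Fin n))), IsAxisRect S ∧ R = f '' S

/-- An open axis-parallel cube in `ℝⁿ`. -/
def IsAxisCube {n : ℕ} (C : Set (EuclideanSpace ℝ (Fin n))) : Prop :=
  ∃ (a : Fin n → ℝ) (s : ℝ), 0 < s ∧ C = {x | ∀ i, x i ∈ Set.Ioo (a i) (a i + s)}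

/-- `M_{𝔅,μ}` is bounded on `L^p(ν)`. -/
def BoundedOnLp {n : ℕ} (μ ν : Measure (EuclideanSpace ℝ (Fin n)))
    (𝔅 : Set (Set (EuclideanSpace ℝ (Fin n)))) (p : ℝ) : Prop :=
  ∃ C : ℝ≥0∞, C ≠ ⊤ ∧ ∀ f : EuclideanSpace ℝ (Fin n) → ℝ, Measurable f →
    ∫⁻ x, maxOp μ 𝔅 f x ^ p ∂ν ≤ C * ∫⁻ x, ENNReal.ofReal |f x| ^ p ∂ν

/-- The Tauberian condition for `M_{𝔅,μ}` at level `γ`, with constant `c`, with respect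
to the measure `ν`. -/
def TauberianCond {n : ℕ} (μ ν : Measure (EuclideanSpace ℝ (Fin n)))
    (𝔅 : Set (Set (EuclideanSpace ℝ (Fin n)))) (γ c : ℝ) : Prop :=
  ∀ E : Set (EuclideanSpace ℝ (Fin n)), MeasurableSet E →
    ν {x | ENNReal.ofReal γ < maxOp μ 𝔅 (E.indicator 1) x} ≤ ENNReal.ofReal c * ν E

/-- The standard open dyadic box of scale `2^k` and position `m` in `ℝⁿ`. -/
def stdBox (n : ℕ) (k : ℤ) (m : Fin n → ℤ) : Set (Fin n → ℝ) :=
  {x | ∀ i, (m i : ℝ) * 2 ^ k < x i ∧ x i < ((m i : ℝ) + 1) * 2 ^ k}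

/-- A parametrization of a rectangular grid: a rigid motion composed with a positive
diagonal scaling. The image of the standard unit box under such a map is a rectangle. -/
def IsRectParam {n : ℕ} (T : (Fin n → ℝ) → EuclideanSpace ℝ (Fin n)) : Prop :=
  ∃ (f : EuclideanSpace ℝ (Fin n) ≃ᵢ EuclideanSpace ℝ (Fin n)) (l : Fin n → ℝ),
    (∀ i, 0 < l i) ∧
    ∀ x, T x = f ((WithLp.equiv 2 (Fin n → ℝ)).symm (fun i => l i * x i))

/-- The dyadic mesh generated by a rectangle parametrized by `T`. -/
def dyadicMesh {n : ℕ} (T : (Fin n → ℝ) → EuclideanSpace ℝ (Fin n)) :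
    Set (Set (EuclideanSpace ℝ (Fin n))) :=
  {S | ∃ (k : ℤ) (m : Fin n → ℤ), S = T '' stdBox n k m}

/-- `S` is a dyadic descendant of the rectangle `R`, `s` generations inside `R`. -/
def DyadicDescendant {n : ℕ} (R S : Set (EuclideanSpace ℝ (Fin n))) (s : ℕ) : Prop :=
  ∃ T : (Fin n → ℝ) → EuclideanSpace ℝ (Fin n), IsRectParam T ∧
    T '' stdBox n 0 0 = R ∧
    ∃ m : Fin n → ℤ, (∀ i, 0 ≤ m i ∧ m i < 2 ^ s) ∧ S = T '' stdBox n (-(s : ℤ)) m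

/-- The family of all homothetic copies (translates and positive dilates) of `R₀`. -/
def homCopies {n : ℕ} (R₀ : Set (EuclideanSpace ℝ (Fin n))) :
    Set (Set (EuclideanSpace ℝ (Fin n))) :=
  {S | ∃ (y : EuclideanSpace ℝ (Fin n)) (s : ℝ), 0 < s ∧ S = y +ᵥ s • R₀}

/-- Iterated halo sets `H_β^k(E)`: `H_β^0(E) = E` and
`H_β^{k+1}(E) = {x : M_{𝔊,μ}(1_{H_β^k(E)})(x) ≥ β}`. -/
def Hiter {n : ℕ} (μ : Measure (EuclideanSpace ℝ (Fin n)))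
    (𝔊 : Set (Set (EuclideanSpace ℝ (Fin n)))) (β : ℝ)
    (E : Set (EuclideanSpace ℝ (Fin n))) : ℕ → Set (EuclideanSpace ℝ (Fin n))
  | 0 => E
  | k + 1 => {x | ENNReal.ofReal β ≤ maxOp μ 𝔊 ((Hiter μ 𝔊 β E k).indicator 1) x}

/-- The Muckenhoupt `A_{p,𝔅}` condition for a weight `w` (with respect to Lebesgue
measure); here `1 - p/(p-1) = 1 - p'`. -/
def MuckenhouptAp {n : ℕ} (𝔅 : Set (Set (EuclideanSpace ℝ (Fin n))))
    (w : EuclideanSpace ℝ (Fin n) → ℝ) (p : ℝ) : Prop :=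
  ∃ C : ℝ≥0∞, C ≠ ⊤ ∧ ∀ B ∈ 𝔅,
    ((∫⁻ x in B, ENNReal.ofReal (w x) ∂volume) / volume B) *
      (((∫⁻ x in B, ENNReal.ofReal (w x) ^ (1 - p / (p - 1)) ∂volume) / volume B) ^ (p - 1))
      ≤ C

/-- `𝔅` is a Muckenhoupt basis: for every `1 < p < ∞` and every weight `w ∈ A_{p,𝔅}`,
the maximal operator `M_𝔅` is bounded on `L^p(w)`. -/
def MuckenhouptBasis {n : ℕ} (𝔅 : Set (Set (EuclideanSpace ℝ (Fin n)))) : Prop :=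
  ∀ p : ℝ, 1 < p → ∀ w : EuclideanSpace ℝ (Fin n) → ℝ, (∀ x, 0 ≤ w x) →
    LocallyIntegrable w volume → MuckenhouptAp 𝔅 w p →
    BoundedOnLp volume (volume.withDensity fun x => ENNReal.ofReal (w x)) 𝔅 p

end

/-!
Doubling over homothetic copies of a rectangle passes to balls, since each copy is squeezed
between two concentric balls of comparable radii:
`μ (closedBall y (t * r)) ≤ C * μ (closedBall y r)` with `C` depending only on `t`.
The frontier of the closed convex set `closure B` is porous: at a frontier point `x`, the
half-space separating `closure B` from a nearby exterior point leaves a ball of radius `r / 4`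
inside `closedBall x r` that misses `closure B`. By ball doubling that ball carries a fixed
fraction `C⁻¹` of the mass of `closedBall x r`, so the frontier has density at most `1 - C⁻¹ < 1`
at each of its points, and the Besicovitch density theorem makes it null. Finally
`interior (closure B) = interior B`, so this frontier is `closure B \ interior B`.
-/

open Metric

lemma IsAxisRect.isConvexBasisSet {n : ℕ} {R : Set (EuclideanSpace ℝ (Fin n))}
    (h : IsAxisRect R) : IsConvexBasisSet R := by
  obtain ⟨a, b, hab, rfl⟩ := h
  let e := EuclideanSpace.equiv (Fin n) ℝ
  have hR : {x : EuclideanSpace ℝ (Fin n) | ∀ i, x i ∈ Ioo (a i) (b i)} =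
      e ⁻¹' univ.pi fun i => Ioo (a i) (b i) := by
    ext; simp [e]
  rw [hR]
  refine ⟨?_, ?_, ?_, ?_⟩
  · exact (univ_pi_nonempty_iff.2 fun i => nonempty_Ioo.2 (hab i)).preimage e.surjective
  · rw [← e.image_symm_eq_preimage]
    exact e.symm.lipschitz.isBounded_image <|
      (isCompact_univ_pi fun i => isCompact_Icc).isBounded.subset
        (pi_mono fun i _ => Ioo_subset_Icc_self)
  · exact (isOpen_set_pi finite_univ fun i _ => isOpen_Ioo).preimage e.continuous
  · exact (convex_pi fun i _ => convex_Ioo (a i) (b i)).linear_preimage e.toLinearEquiv.toLinearMap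

lemma IsRect.isConvexBasisSet {n : ℕ} {R : Set (EuclideanSpace ℝ (Fin n))}
    (h : IsRect R) : IsConvexBasisSet R := by
  obtain ⟨f, S, hS, rfl⟩ := h
  obtain ⟨hne, hbdd, hopen, hconv⟩ := hS.isConvexBasisSet
  refine ⟨hne.image f, f.isometry.lipschitz.isBounded_image hbdd,
    f.toHomeomorph.isOpenMap S hopen, ?_⟩
  simpa using hconv.affine_image f.toRealAffineIsometryEquiv.toAffineMap

lemma Set.smul_vadd_set_distrib {M E : Type*} [Monoid M] [AddMonoid E] [DistribMulAction M E]
    (c : M) (v : E) (K : Set E) : c • (v +ᵥ K) = c • v +ᵥ c • K := by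
  simp only [← Set.image_smul, ← Set.image_vadd, Set.image_image, vadd_eq_add, smul_add]

lemma vadd_smul_closedBall_zero {E : Type*} [NormedAddCommGroup E] [NormedSpace ℝ E] (y : E)
    {a ρ : ℝ} (ha : 0 ≤ a) (hρ : 0 ≤ ρ) : y +ᵥ a • closedBall (0 : E) ρ = closedBall y (a * ρ) := by
  rw [smul_closedBall a 0 hρ, smul_zero, vadd_closedBall, vadd_eq_add, add_zero,
    Real.norm_of_nonneg ha]

section Doubling

variable {n : ℕ} {μ : Measure (EuclideanSpace ℝ (Fin n))} {K : Set (EuclideanSpace ℝ (Fin n))}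
  {δ : ℝ}

lemma homCopies_vadd_subset (K : Set (EuclideanSpace ℝ (Fin n))) (v : EuclideanSpace ℝ (Fin n)) :
    homCopies (v +ᵥ K) ⊆ homCopies K := by
  rintro _ ⟨y, s, hs, rfl⟩
  exact ⟨y + s • v, s, hs, by rw [Set.smul_vadd_set_distrib, vadd_vadd]⟩

lemma DoublingWrt.anti {𝔅 𝔅' : Set (Set (EuclideanSpace ℝ (Fin n)))} (h𝔅 : 𝔅 ⊆ 𝔅')
    (h : DoublingWrt μ 𝔅' δ) : DoublingWrt μ 𝔅 δ :=
  fun B hB => h B (h𝔅 hB)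

lemma DoublingWrt.measure_vadd_two_mul_smul_le (h : DoublingWrt μ (homCopies K) δ)
    (hK : Convex ℝ K) (hK₀ : 0 ∈ K) (y : EuclideanSpace ℝ (Fin n)) {s : ℝ} (hs : 0 < s) :
    μ (y +ᵥ (2 * s) • K) ≤ ENNReal.ofReal δ * μ (y +ᵥ s • K) := by
  have hdil : -y +ᵥ (2 : ℝ) • (y +ᵥ s • K) = y +ᵥ (2 * s) • K := by
    rw [Set.smul_vadd_set_distrib, smul_smul, vadd_vadd]
    congr 1
    module
  have hsub : s • K ⊆ (2 * s) • K := by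
    rintro _ ⟨k, hk, rfl⟩
    refine ⟨(1 / 2 : ℝ) • k, hK.smul_mem_of_zero_mem hK₀ hk ⟨by norm_num, by norm_num⟩, ?_⟩
    module
  rw [← hdil]
  exact h _ ⟨y, s, hs, rfl⟩ (-y) (hdil ▸ vadd_set_mono hsub)

lemma DoublingWrt.measure_vadd_two_pow_mul_smul_le (h : DoublingWrt μ (homCopies K) δ)
    (hK : Convex ℝ K) (hK₀ : 0 ∈ K) (y : EuclideanSpace ℝ (Fin n)) {s : ℝ} (hs : 0 < s) (k : ℕ) :
    μ (y +ᵥ (2 ^ k * s) • K) ≤ ENNReal.ofReal δ ^ k * μ (y +ᵥ s • K) := by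
  induction k with
  | zero => simp
  | succ k ih =>
    calc μ (y +ᵥ (2 ^ (k + 1) * s) • K) = μ (y +ᵥ (2 * (2 ^ k * s)) • K) := by ring_nf
      _ ≤ ENNReal.ofReal δ * μ (y +ᵥ (2 ^ k * s) • K) :=
        h.measure_vadd_two_mul_smul_le hK hK₀ y (by positivity)
      _ ≤ ENNReal.ofReal δ ^ (k + 1) * μ (y +ᵥ s • K) := by
        rw [pow_succ', mul_assoc]; gcongr

lemma DoublingWrt.exists_measure_closedBall_mul_le (h : DoublingWrt μ (homCopies K) δ)
    (hK : IsConvexBasisSet K) (t : ℝ) :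
    ∃ C ≠ ∞, ∀ y r, 0 < r → μ (closedBall y (t * r)) ≤ C * μ (closedBall y r) := by
  obtain ⟨⟨c, hc⟩, hKb, hKo, hKc⟩ := hK
  obtain ⟨ρ, hρ, hρK⟩ := nhds_basis_closedBall.mem_iff.1 (hKo.mem_nhds hc)
  obtain ⟨P, hP, hKP⟩ := hKb.subset_closedBall_lt 0 c
  have h' : DoublingWrt μ (homCopies (-c +ᵥ K)) δ := h.anti (homCopies_vadd_subset K _)
  have hinner : closedBall 0 ρ ⊆ -c +ᵥ K := by
    simpa [vadd_closedBall] using vadd_set_mono (a := -c) hρK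
  have houter : -c +ᵥ K ⊆ closedBall 0 P := by
    simpa [vadd_closedBall] using vadd_set_mono (a := -c) hKP
  obtain ⟨k, hk⟩ := pow_unbounded_of_one_lt (t * P / ρ) one_lt_two
  refine ⟨ENNReal.ofReal δ ^ k, ENNReal.pow_ne_top ENNReal.ofReal_ne_top, fun y r hr => ?_⟩
  have hs : 0 < r / P := by positivity
  calc μ (closedBall y (t * r)) ≤ μ (y +ᵥ (2 ^ k * (r / P)) • (-c +ᵥ K)) := by
        refine measure_mono <| (closedBall_subset_closedBall ?_).trans <|
          (vadd_smul_closedBall_zero y (by positivity) hρ.le).symm.subset.trans <|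
          vadd_set_mono (smul_set_mono hinner)
        rw [div_lt_iff₀ hρ] at hk
        calc t * r = t * P * (r / P) := by field_simp
          _ ≤ 2 ^ k * (r / P) * ρ := by nlinarith
    _ ≤ ENNReal.ofReal δ ^ k * μ (y +ᵥ (r / P) • (-c +ᵥ K)) :=
        h'.measure_vadd_two_pow_mul_smul_le (hKc.vadd _) (hinner (mem_closedBall_self hρ.le)) y hs k
    _ ≤ ENNReal.ofReal δ ^ k * μ (closedBall y r) := by
        gcongr
        calc y +ᵥ (r / P) • (-c +ᵥ K)
            ⊆ y +ᵥ (r / P) • closedBall (0 : EuclideanSpace ℝ (Fin n)) P :=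
              vadd_set_mono (smul_set_mono houter)
          _ = closedBall y r := by
              rw [vadd_smul_closedBall_zero y hs.le hP.le, div_mul_cancel₀ r hP.ne']

end Doubling

lemma Convex.interior_closure_eq_interior {V : Type*} [NormedAddCommGroup V] [NormedSpace ℝ V]
    [FiniteDimensional ℝ V] {s : Set V} (hs : Convex ℝ s) : interior (closure s) = interior s := by
  rcases (interior s).eq_empty_or_nonempty with h | h
  · rw [h, ← not_nonempty_iff_eq_empty, hs.closure.interior_nonempty_iff_affineSpan_eq_top,
      ← top_le_iff]
    intro htop
    have hspan : closure s ⊆ affineSpan ℝ s :=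
      closure_minimal (subset_affineSpan ℝ s) (affineSpan ℝ s).closed_of_finiteDimensional
    rw [← not_nonempty_iff_eq_empty, hs.interior_nonempty_iff_affineSpan_eq_top, ← top_le_iff] at h
    exact h (htop.trans (affineSpan_le.2 hspan))
  · exact hs.interior_closure_eq_interior_of_nonempty_interior h

section Porosity

open scoped InnerProductSpace

variable {E : Type*} [NormedAddCommGroup E] [InnerProductSpace ℝ E] [CompleteSpace E]
  {C : Set E}

lemma Convex.exists_norm_eq_one_inner_le (hC : Convex ℝ C) (hCc : IsClosed C) {x z : E}
    (hx : x ∈ C) (hz : z ∉ C) : ∃ ν : E, ‖ν‖ = 1 ∧ ∀ y ∈ C, ⟪ν, y - x⟫_ℝ ≤ 2 * ‖z - x‖ := by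
  obtain ⟨p, hpC, hp⟩ := exists_norm_eq_iInf_of_complete_convex ⟨x, hx⟩ hCc.isComplete hC z
  have hproj := (norm_eq_iInf_iff_real_inner_le_zero hC hpC).1 hp
  have hzp : z - p ≠ 0 := sub_ne_zero.2 fun h => hz (h ▸ hpC)
  have hpz : ‖z - p‖ ≤ ‖z - x‖ := by
    rw [hp]
    exact ciInf_le ⟨0, by rintro _ ⟨w, rfl⟩; positivity⟩ (⟨x, hx⟩ : C)
  refine ⟨‖z - p‖⁻¹ • (z - p), by simp [norm_smul, hzp], fun y hy => ?_⟩
  calc ⟪‖z - p‖⁻¹ • (z - p), y - x⟫_ℝ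
      = ‖z - p‖⁻¹ * ⟪z - p, y - p⟫_ℝ + ⟪‖z - p‖⁻¹ • (z - p), p - x⟫_ℝ := by
        rw [← real_inner_smul_left, ← inner_add_right]; congr 1; abel
    _ ≤ 0 + ‖p - x‖ := by
        gcongr
        · exact mul_nonpos_of_nonneg_of_nonpos (by positivity) (hproj y hy)
        · exact (real_inner_le_norm _ _).trans (by simp [norm_smul, hzp])
    _ ≤ 2 * ‖z - x‖ := by
        linarith [norm_sub_le_norm_sub_add_norm_sub p z x, norm_sub_rev p z]

lemma Convex.exists_closedBall_subset_disjoint_of_mem_frontier (hC : Convex ℝ C)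
    (hCc : IsClosed C) {x : E} (hx : x ∈ frontier C) {r : ℝ} (hr : 0 < r) :
    ∃ w, closedBall w (r / 4) ⊆ closedBall x r ∧ Disjoint (closedBall w (r / 4)) C := by
  obtain ⟨z, hz, hzx⟩ := Metric.mem_closure_iff.1
    (frontier_subset_closure (frontier_compl C ▸ hx)) (r / 8) (by positivity)
  obtain ⟨ν, hν, hνC⟩ := hC.exists_norm_eq_one_inner_le hCc (hCc.frontier_subset hx) hz
  have hwx : dist (x + (r / 2) • ν) x = r / 2 := by
    simp [dist_eq_norm, norm_smul, hν, abs_of_pos hr]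
  refine ⟨x + (r / 2) • ν, closedBall_subset_closedBall' (by linarith), ?_⟩
  rw [Set.disjoint_left]
  intro y hy hyC
  rw [mem_closedBall, dist_eq_norm] at hy
  have hfar : r / 4 ≤ ⟪ν, y - x⟫_ℝ := by
    have hyw : y - x = (y - (x + (r / 2) • ν)) + (r / 2) • ν := by abel
    have := abs_le.1 ((abs_real_inner_le_norm ν (y - (x + (r / 2) • ν))).trans_eq
      (by rw [hν, one_mul]))
    rw [hyw, inner_add_right, real_inner_smul_right, real_inner_self_eq_norm_sq, hν]
    linarith [this.1]
  have hnear := hνC y hyC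
  rw [← dist_eq_norm, dist_comm] at hnear
  linarith

end Porosity

lemma measure_inter_le_one_sub_inv_mul {α : Type*} [MeasurableSpace α] {μ : Measure α}
    {s t u : Set α} {C : ℝ≥0∞} (hut : u ⊆ t) (hu : MeasurableSet u) (hus : Disjoint u s)
    (ht : μ t ≠ ∞) (hC : μ t ≤ C * μ u) : μ (s ∩ t) ≤ (1 - C⁻¹) * μ t := by
  have hCu : C⁻¹ * μ t ≤ μ u := by
    rw [← ENNReal.div_eq_inv_mul]
    exact ENNReal.div_le_of_le_mul' hC
  calc μ (s ∩ t) ≤ μ (t \ u) :=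
        measure_mono fun y hy => ⟨hy.2, fun hyu => hus.ne_of_mem hyu hy.1 rfl⟩
    _ = μ t - μ u :=
        measure_sdiff hut hu.nullMeasurableSet (ne_top_of_le_ne_top ht (measure_mono hut))
    _ ≤ μ t - C⁻¹ * μ t := tsub_le_tsub_left hCu _
    _ = (1 - C⁻¹) * μ t := by rw [ENNReal.sub_mul fun _ _ => ht, one_mul]

lemma measure_eq_zero_of_forall_measure_inter_closedBall_le {β : Type*} [MetricSpace β]
    [MeasurableSpace β] [BorelSpace β] [SecondCountableTopology β] [HasBesicovitchCovering β]
    (μ : Measure β) [IsLocallyFiniteMeasure μ] {s : Set β} (hs : MeasurableSet s) {c : ℝ≥0∞}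
    (hc : c < 1) (h : ∀ x ∈ s, ∀ r > 0, μ (s ∩ closedBall x r) ≤ c * μ (closedBall x r)) :
    μ s = 0 := by
  by_contra hμs
  have : (ae (μ.restrict s)).NeBot := ae_neBot.2 fun h => hμs (Measure.restrict_eq_zero.1 h)
  obtain ⟨x, hx, hxs⟩ :=
    (Besicovitch.ae_tendsto_measure_inter_div μ s |>.and (ae_restrict_mem hs)).exists
  exact hc.not_ge <| le_of_tendsto hx <| eventually_mem_nhdsWithin.mono fun r hr =>
    ENNReal.div_le_of_le_mul (h x hxs r hr)

theorem statement13_general (n : ℕ) (R₀ : Set (EuclideanSpace ℝ (Fin n))) (hR₀ : IsRect R₀)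
    (μ : Measure (EuclideanSpace ℝ (Fin n)))
    (hloc : IsLocallyFiniteMeasure μ)
    (hdbl : ∃ δ : ℝ, 1 < δ ∧ DoublingWrt μ (homCopies R₀) δ) :
    ∀ B : Set (EuclideanSpace ℝ (Fin n)), Convex ℝ B →
      μ (closure B \ interior B) = 0 := by
  intro B hB
  obtain ⟨δ, -, hdbl⟩ := hdbl
  obtain ⟨C, hC, hCball⟩ := hdbl.exists_measure_closedBall_mul_le hR₀.isConvexBasisSet 8
  have hF : closure B \ interior B = frontier (closure B) := by
    rw [frontier, closure_closure, hB.interior_closure_eq_interior]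
  rw [hF]
  refine measure_eq_zero_of_forall_measure_inter_closedBall_le μ isClosed_frontier.measurableSet
    (ENNReal.sub_lt_self ENNReal.one_ne_top one_ne_zero (ENNReal.inv_ne_zero.2 hC))
    fun x hx r hr => ?_
  obtain ⟨w, hwx, hwB⟩ :=
    hB.closure.exists_closedBall_subset_disjoint_of_mem_frontier isClosed_closure hx hr
  refine measure_inter_le_one_sub_inv_mul hwx measurableSet_closedBall
    (hwB.mono_right isClosed_closure.frontier_subset) measure_closedBall_lt_top.ne ?_
  calc μ (closedBall x r) ≤ μ (closedBall w (8 * (r / 4))) := by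
        refine measure_mono (closedBall_subset_closedBall' ?_)
        linarith [dist_comm x w ▸ mem_closedBall.1 (hwx (mem_closedBall_self (by positivity)))]
    _ ≤ C * μ (closedBall w (r / 4)) := hCball w _ (by positivity)

/-- Proposition `p.noboundarymass` (iv) of the paper. A nonzero
locally finite Borel measure which is doubling with respect to the family of homothetic
copies of a fixed rectangle assigns zero mass to the boundary of every convex set. -/
theorem statement13 (n : ℕ) (R₀ : Set (EuclideanSpace ℝ (Fin n))) (hR₀ : IsRect R₀)
    (μ : Measure (EuclideanSpace ℝ (Fin n)))
    (hloc : IsLocallyFiniteMeasure μ) (hμ : μ ≠ 0)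
    (hdbl : ∃ δ : ℝ, 1 < δ ∧ DoublingWrt μ (homCopies R₀) δ) :
    ∀ B : Set (EuclideanSpace ℝ (Fin n)), Convex ℝ B →
      μ (closure B \ interior B) = 0 :=
  statement13_general n R₀ hR₀ μ hloc hdbl
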